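/- arXiv:2306.12377 — 2 statements merged into one kernel-verified Lean document; each statement's English description precedes it below -/
import Mathlib

section
/- Multi-scale random partition separation bound: under the construction with scales P_i that are C^i-bounded and β-Lipschitz and a B-Lipschitz radius function r, for any p, q ∈ X with r(p) ≤ r(q), the probability that p and q land in different clusters is at most (2B/log C + β)·ρ(p,q)/r(p). -/
open MeasureTheory

lemma vol_ceil_ne {a b : ℝ} (hab : a ≤ b) :
    volume ({α : ℝ | ⌈α + a⌉ ≠ ⌈α + b⌉} ∩ Set.Icc 0 1) ≤ ENNReal.ofReal (2 * (b - a)) := by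
  rcases le_or_gt (1/2) (b - a) with h | h
  · calc volume ({α : ℝ | ⌈α + a⌉ ≠ ⌈α + b⌉} ∩ Set.Icc 0 1)
        ≤ volume (Set.Icc (0:ℝ) 1) := measure_mono Set.inter_subset_right
      _ = ENNReal.ofReal 1 := by rw [Real.volume_Icc]; norm_num
      _ ≤ _ := ENNReal.ofReal_le_ofReal (by linarith)
  · have hsub : {α : ℝ | ⌈α + a⌉ ≠ ⌈α + b⌉} ∩ Set.Icc 0 1 ⊆
        Set.Icc ((⌈a⌉:ℝ) - b) ((⌈a⌉:ℝ) - a) ∪ Set.Icc ((⌈a⌉:ℝ) + 1 - b) ((⌈a⌉:ℝ) + 1 - a) := by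
      rintro α ⟨hne, h0, h1⟩
      have hle : ⌈α + a⌉ ≤ ⌈α + b⌉ := Int.ceil_le_ceil (by linarith)
      have hlt : ⌈α + a⌉ < ⌈α + b⌉ := lt_of_le_of_ne hle hne
      have h2 : α + a ≤ (⌈α + a⌉ : ℝ) := Int.le_ceil _
      have h3 : ((⌈α + a⌉ : ℤ) : ℝ) < α + b := by
        have h4 : ((⌈α + a⌉ : ℤ) : ℝ) + 1 ≤ ((⌈α + b⌉ : ℤ) : ℝ) := by exact_mod_cast hlt
        have h5 : ((⌈α + b⌉ : ℤ) : ℝ) < α + b + 1 := Int.ceil_lt_add_one _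
        linarith
      have hn1 : ⌈a⌉ ≤ ⌈α + a⌉ := Int.ceil_le_ceil (by linarith)
      have hn2 : ⌈α + a⌉ ≤ ⌈a⌉ + 1 := by
        have hca : a ≤ (⌈a⌉ : ℝ) := Int.le_ceil a
        have : ((⌈α + a⌉ : ℤ) : ℝ) < ((⌈a⌉ : ℤ) : ℝ) + 2 := by linarith
        have : (⌈α + a⌉ : ℤ) < ⌈a⌉ + 2 := by exact_mod_cast this
        omega
      have hcases : ⌈α + a⌉ = ⌈a⌉ ∨ ⌈α + a⌉ = ⌈a⌉ + 1 := by omega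
      rcases hcases with hc | hc
      · left
        rw [hc] at h2 h3
        exact ⟨by linarith, by linarith⟩
      · right
        rw [hc] at h2 h3
        push_cast at h2 h3
        exact ⟨by linarith, by linarith⟩
    calc volume ({α : ℝ | ⌈α + a⌉ ≠ ⌈α + b⌉} ∩ Set.Icc 0 1)
        ≤ volume (Set.Icc ((⌈a⌉:ℝ) - b) ((⌈a⌉:ℝ) - a)) +
          volume (Set.Icc ((⌈a⌉:ℝ) + 1 - b) ((⌈a⌉:ℝ) + 1 - a)) :=
          (measure_mono hsub).trans (measure_union_le _ _)
      _ = ENNReal.ofReal (b - a) + ENNReal.ofReal (b - a) := by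
          rw [Real.volume_Icc, Real.volume_Icc]; ring_nf
      _ = ENNReal.ofReal (2 * (b - a)) := by
          rw [← ENNReal.ofReal_add (by linarith) (by linarith)]; ring_nf

/-- Multi-scale random partition separation bound. The sample space is a product
`Ω × [0,1]`: the first coordinate drives the partitions `P i` at each scale `i ∈ ℤ`
(each `C^i`-bounded and `β`-Lipschitz), and the second coordinate is the uniform
shift `α` used to pick the level `⌈α + log_C r(x)⌉` of each point `x`. For a
`B`-Lipschitz positive radius function `r` and points `p q` with `r p ≤ r q`, the
probability that `p` and `q` are assigned to different clusters is at most
`(2B/log C + β)·ρ(p,q)/r(p)`. -/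
theorem multiscale_separation_bound {X : Type*} [MetricSpace X]
    {Ω : Type*} [MeasurableSpace Ω] (ν : Measure Ω) [IsProbabilityMeasure ν]
    (C : ℝ) (hC : 1 < C) (β : ℝ) (hβ : 0 ≤ β)
    (P : ℤ → Ω → X → Set X)
    (hbounded : ∀ (i : ℤ) (ω : Ω) (x : X), Metric.diam (P i ω x) ≤ C ^ i)
    (hLipPart : ∀ (i : ℤ) (x y : X),
      ν {ω | P i ω x ≠ P i ω y} ≤ ENNReal.ofReal (β * dist x y / C ^ i))
    (r : X → ℝ) (B : ℝ) (hB : 0 ≤ B)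
    (hrLip : ∀ x y, |r x - r y| ≤ B * dist x y) (hrpos : ∀ x, 0 < r x)
    (p q : X) (hpq : r p ≤ r q) :
    (ν.prod (volume.restrict (Set.Icc (0 : ℝ) 1)))
        {w : Ω × ℝ |
          P ⌈w.2 + Real.logb C (r p)⌉ w.1 p ≠ P ⌈w.2 + Real.logb C (r q)⌉ w.1 q} ≤
      ENNReal.ofReal ((2 * B / Real.log C + β) * (dist p q / r p)) := by
  have hC0 : (0:ℝ) < C := lt_trans one_pos hC
  have hlogC : 0 < Real.log C := Real.log_pos hC
  have hrp : 0 < r p := hrpos p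
  have hrq : 0 < r q := hrpos q
  have hd : 0 ≤ dist p q := dist_nonneg
  set a := Real.logb C (r p) with ha
  set b := Real.logb C (r q) with hb
  have hab : a ≤ b := Real.logb_le_logb_of_le hC hrp hpq
  set μ := ν.prod (volume.restrict (Set.Icc (0 : ℝ) 1)) with hμ
  set E : ℤ → Set Ω := fun t => {ω | P t ω p ≠ P t ω q} with hE
  set A : ℤ → Set ℝ := fun t => Set.Ioc ((t:ℝ) - 1 - a) ((t:ℝ) - a) with hA
  set A₁ : Set ℝ := {α : ℝ | ⌈α + a⌉ ≠ ⌈α + b⌉} with hA₁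
  -- membership in A t ↔ ⌈α + a⌉ = t
  have hAmem : ∀ (t : ℤ) (α : ℝ), ⌈α + a⌉ = t → α ∈ A t := by
    intro t α hα
    rw [Int.ceil_eq_iff] at hα
    exact ⟨by linarith [hα.1], by linarith [hα.2]⟩
  -- C^t ≥ r p for t ≥ ⌈a⌉
  have hpow : ∀ t : ℤ, ⌈a⌉ ≤ t → r p ≤ C ^ t := by
    intro t ht
    have h1 : r p = C ^ (a : ℝ) := (Real.rpow_logb hC0 (ne_of_gt hC) hrp).symm
    rw [h1, ← Real.rpow_intCast]
    exact Real.rpow_le_rpow_of_exponent_le hC.le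
      (le_trans (Int.le_ceil a) (by exact_mod_cast ht))
  have hEbound : ∀ t : ℤ, ⌈a⌉ ≤ t →
      ν (E t) ≤ ENNReal.ofReal (β * dist p q / r p) := by
    intro t ht
    refine (hLipPart t p q).trans (ENNReal.ofReal_le_ofReal ?_)
    exact div_le_div_of_nonneg_left (mul_nonneg hβ hd) hrp (hpow t ht)
  -- covering
  have hcover : {w : Ω × ℝ | P ⌈w.2 + a⌉ w.1 p ≠ P ⌈w.2 + b⌉ w.1 q} ⊆
      ((Set.univ ×ˢ (Set.Icc (0:ℝ) 1)ᶜ) ∪ (Set.univ ×ˢ A₁)) ∪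
      ((E ⌈a⌉ ×ˢ A ⌈a⌉) ∪ (E (⌈a⌉ + 1) ×ˢ A (⌈a⌉ + 1))) := by
    rintro ⟨ω, α⟩ hw
    simp only [Set.mem_setOf_eq] at hw
    by_cases hα : α ∈ Set.Icc (0:ℝ) 1
    · by_cases hc : ⌈α + a⌉ = ⌈α + b⌉
      · right
        have ht1 : ⌈a⌉ ≤ ⌈α + a⌉ := Int.ceil_le_ceil (by linarith [hα.1])
        have ht2 : ⌈α + a⌉ ≤ ⌈a⌉ + 1 := by
          have : ⌈α + a⌉ ≤ ⌈a + 1⌉ := Int.ceil_le_ceil (by linarith [hα.2])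
          simpa [Int.ceil_add_one] using this
        have hEmem : ω ∈ E ⌈α + a⌉ := by
          simp only [hE, Set.mem_setOf_eq]
          rw [hc] at hw ⊢; exact hw
        rcases (by omega : ⌈α + a⌉ = ⌈a⌉ ∨ ⌈α + a⌉ = ⌈a⌉ + 1) with h | h
        · left; exact ⟨h ▸ hEmem, hAmem _ _ h⟩
        · right; exact ⟨h ▸ hEmem, hAmem _ _ h⟩
      · left; right; exact ⟨Set.mem_univ _, hc⟩
    · left; left; exact ⟨Set.mem_univ _, hα⟩
  have h1 : μ (Set.univ ×ˢ (Set.Icc (0:ℝ) 1)ᶜ) = 0 := by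
    rw [hμ, Measure.prod_prod, Measure.restrict_apply' measurableSet_Icc,
      Set.compl_inter_self, measure_empty, mul_zero]
  have h2 : μ (Set.univ ×ˢ A₁) ≤ ENNReal.ofReal (2 * B / Real.log C * (dist p q / r p)) := by
    rw [hμ, Measure.prod_prod, measure_univ, one_mul,
      Measure.restrict_apply' measurableSet_Icc]
    refine (vol_ceil_ne hab).trans (ENNReal.ofReal_le_ofReal ?_)
    -- 2 * (b - a) ≤ 2 * B / log C * (dist p q / r p)
    have hlog : Real.log (r q / r p) ≤ (r q - r p) / r p := by
      have h := Real.log_le_sub_one_of_pos (div_pos hrq hrp)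
      have : r q / r p - 1 = (r q - r p) / r p := by field_simp
      linarith [this ▸ h]
    have hdelta : b - a ≤ B * dist p q / (Real.log C * r p) := by
      have heq : b - a = Real.log (r q / r p) / Real.log C := by
        rw [ha, hb, Real.logb, Real.logb, div_sub_div_same,
          Real.log_div (ne_of_gt hrq) (ne_of_gt hrp)]
      have hrd : r q - r p ≤ B * dist p q := by
        have h := hrLip q p
        rw [dist_comm q p] at h
        calc r q - r p ≤ |r q - r p| := le_abs_self _
          _ ≤ B * dist p q := h
      rw [heq]
      rw [div_le_div_iff₀ hlogC (by positivity)]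
      calc Real.log (r q / r p) * (Real.log C * r p)
          = (Real.log (r q / r p) * r p) * Real.log C := by ring
        _ ≤ (B * dist p q) * Real.log C := by
            apply mul_le_mul_of_nonneg_right _ hlogC.le
            calc Real.log (r q / r p) * r p ≤ ((r q - r p) / r p) * r p :=
                  mul_le_mul_of_nonneg_right hlog hrp.le
              _ = r q - r p := by field_simp
              _ ≤ B * dist p q := hrd
        _ = B * dist p q * Real.log C := rfl
    calc 2 * (b - a) ≤ 2 * (B * dist p q / (Real.log C * r p)) := by linarith
      _ = 2 * B / Real.log C * (dist p q / r p) := by field_simp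
  have h3 : μ (E ⌈a⌉ ×ˢ A ⌈a⌉) + μ (E (⌈a⌉ + 1) ×ˢ A (⌈a⌉ + 1)) ≤
      ENNReal.ofReal (β * dist p q / r p) := by
    rw [hμ, Measure.prod_prod, Measure.prod_prod]
    set vr := volume.restrict (Set.Icc (0:ℝ) 1) with hvr
    have hsum : vr (A ⌈a⌉) + vr (A (⌈a⌉ + 1)) ≤ 1 := by
      have hdisj : Disjoint (A ⌈a⌉) (A (⌈a⌉ + 1)) := by
        simp only [hA]
        rw [Set.Ioc_disjoint_Ioc]
        push_cast
        exact le_trans (min_le_left _ _) (le_max_of_le_right (by linarith))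
      have hmeas : MeasurableSet (A (⌈a⌉ + 1)) := by
        simp only [hA]; exact measurableSet_Ioc
      rw [← measure_union hdisj hmeas]
      calc vr (A ⌈a⌉ ∪ A (⌈a⌉ + 1)) ≤ vr Set.univ := measure_mono (Set.subset_univ _)
        _ = 1 := by rw [hvr, Measure.restrict_apply_univ, Real.volume_Icc]; norm_num
    calc ν (E ⌈a⌉) * vr (A ⌈a⌉) + ν (E (⌈a⌉ + 1)) * vr (A (⌈a⌉ + 1))
        ≤ ENNReal.ofReal (β * dist p q / r p) * vr (A ⌈a⌉) +
          ENNReal.ofReal (β * dist p q / r p) * vr (A (⌈a⌉ + 1)) := by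
          gcongr
          · exact hEbound _ le_rfl
          · exact hEbound _ (by omega)
      _ = ENNReal.ofReal (β * dist p q / r p) * (vr (A ⌈a⌉) + vr (A (⌈a⌉ + 1))) := by ring
      _ ≤ ENNReal.ofReal (β * dist p q / r p) * 1 := by gcongr
      _ = _ := mul_one _
  calc μ {w : Ω × ℝ | P ⌈w.2 + a⌉ w.1 p ≠ P ⌈w.2 + b⌉ w.1 q}
      ≤ μ (((Set.univ ×ˢ (Set.Icc (0:ℝ) 1)ᶜ) ∪ (Set.univ ×ˢ A₁)) ∪
          ((E ⌈a⌉ ×ˢ A ⌈a⌉) ∪ (E (⌈a⌉ + 1) ×ˢ A (⌈a⌉ + 1)))) := measure_mono hcover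
    _ ≤ (μ (Set.univ ×ˢ (Set.Icc (0:ℝ) 1)ᶜ) + μ (Set.univ ×ˢ A₁)) +
        (μ (E ⌈a⌉ ×ˢ A ⌈a⌉) + μ (E (⌈a⌉ + 1) ×ˢ A (⌈a⌉ + 1))) :=
        (measure_union_le _ _).trans (by gcongr <;> exact measure_union_le _ _)
    _ ≤ (0 + ENNReal.ofReal (2 * B / Real.log C * (dist p q / r p))) +
        ENNReal.ofReal (β * dist p q / r p) :=
        add_le_add (add_le_add (le_of_eq h1) h2) h3
    _ = ENNReal.ofReal ((2 * B / Real.log C + β) * (dist p q / r p)) := by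
        rw [zero_add, ← ENNReal.ofReal_add (by positivity) (by positivity)]
        ring_nf
end

section
/- In ℝ^d, if every cluster of a partition containing p has diameter at most γ(p)·h where γ(p) is the k-th nearest-neighbor radius and this holds for all points p in the cluster, then each cluster contains at most k·(1+8h)^d points of X; consequently a partition of X into such clusters has every cluster of size at most k·(1+8h)^d, giving brute-force enumeration complexity at most 2^{k(1+8h)^d} per cluster. -/
/-!
Let `p₀` minimise `γ = kthDist X k` over the cluster `C` and put `r = γ p₀`, so `C` lies in the
closed ball of radius `h r` about `p₀`. A maximal `r`-separated subset `S ⊆ C` is an `r`-net of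
`C`; a volume comparison of the disjoint balls of radius `r / 2` about `S` with the ball of radius
`(1 + 2h) r / 2` about `p₀` gives `|S| ≤ (1 + 2h)^d`. Every point of `C` is within `r ≤ γ s` of
some `s ∈ S`, and fewer than `k` points of `X` are that close to `s`, so `|C| ≤ k |S|`.
-/

/-- The distance from `p` to its `k`-th nearest neighbor in the finite set `X`. -/
noncomputable def kthDist {d : ℕ} (X : Finset (EuclideanSpace ℝ (Fin d))) (k : ℕ)
    (p : EuclideanSpace ℝ (Fin d)) : ℝ :=
  ((X.val.map (fun x => dist p x)).sort (· ≤ ·)).getD (k - 1) 0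

open Metric MeasureTheory Measure

theorem List.Pairwise.countP_lt_getElem_le {α : Type*} [LinearOrder α] {L : List α}
    (hL : L.Pairwise (· ≤ ·)) {i : ℕ} (hi : i < L.length) :
    L.countP (· < L[i]) ≤ i := by
  have hdrop : (L.drop i).countP (· < L[i]) = 0 := by
    refine List.countP_eq_zero.2 fun a ha => ?_
    obtain ⟨j, hj, rfl⟩ := List.mem_iff_getElem.1 ha
    rw [List.getElem_drop]
    simpa using hL.rel_get_of_le (a := ⟨i, hi⟩) (b := ⟨i + j, by simp at hj; omega⟩)
      (by simp [Fin.le_def])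
  calc L.countP (· < L[i])
      = (L.take i).countP (· < L[i]) + (L.drop i).countP (· < L[i]) := by
        rw [← List.countP_append, List.take_append_drop]
    _ ≤ i := by
        rw [hdrop, add_zero]
        exact List.countP_le_length.trans (List.length_take_le i L)

theorem Finset.exists_subset_separated_cover {α : Type*} [PseudoMetricSpace α] (C : Finset α)
    {r : ℝ} (hr : 0 < r) :
    ∃ S ⊆ C, (S : Set α).Pairwise (fun a b => r ≤ dist a b) ∧ ∀ q ∈ C, ∃ s ∈ S, dist q s < r := by
  classical
  obtain ⟨S, hS⟩ := (C.powerset.filter fun S : Finset α =>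
    (S : Set α).Pairwise (fun a b => r ≤ dist a b)).exists_maximal ⟨∅, by simp⟩
  simp only [Finset.mem_filter, Finset.mem_powerset] at hS
  obtain ⟨hSC, hsep⟩ := hS.prop
  refine ⟨S, hSC, hsep, fun q hq => ?_⟩
  by_contra! hfar
  have hqS : q ∉ S := fun hqS => (hfar q hqS).not_gt (by simpa using hr)
  refine hqS (hS.eq_of_ge ⟨Finset.insert_subset hq hSC, ?_⟩ (Finset.subset_insert q S) ▸
    Finset.mem_insert_self q S)
  rw [Finset.coe_insert, Set.pairwise_insert]
  exact ⟨hsep, fun s hs _ => ⟨hfar s hs, dist_comm q s ▸ hfar s hs⟩⟩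

theorem card_le_of_separated_subset_closedBall {E : Type*} [NormedAddCommGroup E]
    [NormedSpace ℝ E] [FiniteDimensional ℝ E] {S : Finset E} {x : E} {r c : ℝ} (hr : 0 < r)
    (hc : 0 ≤ c) (hSx : (S : Set E) ⊆ closedBall x (c * r))
    (hsep : (S : Set E).Pairwise (fun a b => r ≤ dist a b)) :
    (S.card : ℝ) ≤ (1 + 2 * c) ^ Module.finrank ℝ E := by
  borelize E
  set μ : Measure E := Measure.addHaar
  set m := μ (ball 0 (r / 2))
  have hm0 : m ≠ 0 := (measure_ball_pos μ 0 (by positivity)).ne'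
  have hmtop : m ≠ ⊤ := measure_ball_lt_top.ne
  have hdisj : (S : Set E).PairwiseDisjoint (fun s => ball s (r / 2)) :=
    hsep.mono' fun a b h => ball_disjoint_ball (by linarith)
  have hsub : (⋃ s ∈ S, ball s (r / 2)) ⊆ ball x ((1 + 2 * c) * (r / 2)) := by
    refine Set.iUnion₂_subset fun s hs => ball_subset_ball' ?_
    have := mem_closedBall.1 (hSx hs)
    linarith
  have hvol : (S.card : ENNReal) * m ≤ ENNReal.ofReal ((1 + 2 * c) ^ Module.finrank ℝ E) * m :=
    calc (S.card : ENNReal) * m = μ (⋃ s ∈ S, ball s (r / 2)) := by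
          rw [measure_biUnion_finset hdisj fun s _ => measurableSet_ball]
          simp [m, addHaar_ball_center μ _ (r / 2)]
      _ ≤ μ (ball x ((1 + 2 * c) * (r / 2))) := measure_mono hsub
      _ = _ := addHaar_ball_mul_of_pos μ x (by positivity) _
  rcases S.eq_empty_or_nonempty with rfl | hS
  · simp only [Finset.card_empty, Nat.cast_zero]
    positivity
  exact (ENNReal.natCast_le_ofReal hS.card_pos.ne').1
    ((ENNReal.mul_le_mul_iff_left hm0 hmtop).1 hvol)

section kthDist

variable {d : ℕ} (X : Finset (EuclideanSpace ℝ (Fin d))) (k : ℕ)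

theorem kthDist_nonneg (p : EuclideanSpace ℝ (Fin d)) : 0 ≤ kthDist X k p := by
  set L := (X.val.map (fun x => dist p x)).sort (· ≤ ·)
  by_cases hk : k - 1 < L.length
  · obtain ⟨x, -, hx⟩ := Multiset.mem_map.1 ((Multiset.mem_sort _).1 (List.getElem_mem hk))
    rw [kthDist, List.getD_eq_getElem _ _ hk, ← hx]
    exact dist_nonneg
  · rw [kthDist, List.getD_eq_default _ _ (not_lt.1 hk)]

/-- For an out-of-range index `k - 1`, `kthDist` is the junk value `0` and the filter is empty. -/
theorem card_filter_dist_lt_kthDist_le (p : EuclideanSpace ℝ (Fin d)) :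
    {x ∈ X | dist p x < kthDist X k p}.card ≤ k - 1 := by
  set L := (X.val.map (fun x => dist p x)).sort (· ≤ ·)
  by_cases hk : k - 1 < L.length
  · have hγ : kthDist X k p = L[k - 1] := List.getD_eq_getElem L 0 hk
    calc {x ∈ X | dist p x < kthDist X k p}.card
        = L.countP (· < L[k - 1]) := by
          rw [← hγ, ← Multiset.coe_countP, Multiset.sort_eq, Multiset.countP_map]
          rfl
      _ ≤ k - 1 := (Multiset.pairwise_sort _ _).countP_lt_getElem_le hk
  · have hγ : kthDist X k p = 0 := List.getD_eq_default L 0 (not_lt.1 hk)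
    simp [hγ, not_lt.2 dist_nonneg]

theorem card_le_of_diam_le_mul_kthDist {C : Finset (EuclideanSpace ℝ (Fin d))} (hk : 1 ≤ k)
    {h : ℝ} (hh : 0 ≤ h) (hCX : C ⊆ X)
    (hdiam : ∀ p ∈ C, diam (C : Set (EuclideanSpace ℝ (Fin d))) ≤ h * kthDist X k p) :
    (C.card : ℝ) ≤ k * (1 + 2 * h) ^ d := by
  rcases C.eq_empty_or_nonempty with rfl | hC
  · simp only [Finset.card_empty, Nat.cast_zero]
    positivity
  obtain ⟨p₀, hp₀, hmin⟩ := C.exists_min_image (kthDist X k) hC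
  have hdist : ∀ q ∈ C, dist q p₀ ≤ h * kthDist X k p₀ := fun q hq =>
    (dist_le_diam_of_mem C.finite_toSet.isBounded hq hp₀).trans (hdiam p₀ hp₀)
  have hr₀ := kthDist_nonneg X k p₀
  generalize kthDist X k p₀ = r at hmin hdist hr₀
  have hk' : (1 : ℝ) ≤ k := by exact_mod_cast hk
  rcases hr₀.eq_or_lt with rfl | hr
  · have hC1 : C ⊆ {p₀} := fun q hq => by simpa using hdist q hq
    calc (C.card : ℝ) ≤ 1 := by exact_mod_cast Finset.card_le_one_iff_subset_singleton.2 ⟨p₀, hC1⟩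
      _ ≤ k * (1 + 2 * h) ^ d := one_le_mul_of_one_le_of_one_le hk' (one_le_pow₀ (by linarith))
  obtain ⟨S, hSC, hsep, hcover⟩ := C.exists_subset_separated_cover hr
  have hS : (S.card : ℝ) ≤ (1 + 2 * h) ^ d := by
    simpa using card_le_of_separated_subset_closedBall hr hh
      (fun s hs => mem_closedBall.2 (hdist s (hSC hs))) hsep
  have hCS : C.card ≤ S.card * k := by
    refine (Finset.card_le_card fun q hq => ?_).trans (Finset.card_biUnion_le_card_mul S
      (fun s => {x ∈ X | dist s x < kthDist X k s}) k
      fun s _ => (card_filter_dist_lt_kthDist_le X k s).trans (Nat.sub_le k 1))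
    obtain ⟨s, hs, hqs⟩ := hcover q hq
    exact Finset.mem_biUnion.2 ⟨s, hs, Finset.mem_filter.2
      ⟨hCX hq, dist_comm q s ▸ hqs.trans_le (hmin s (hSC hs))⟩⟩
  calc (C.card : ℝ) ≤ S.card * k := by exact_mod_cast hCS
    _ ≤ (1 + 2 * h) ^ d * k := by gcongr
    _ = k * (1 + 2 * h) ^ d := mul_comm _ _

end kthDist

theorem cluster_card_and_enumeration_bound_general {d k : ℕ}
    (X : Finset (EuclideanSpace ℝ (Fin d))) (hk : 1 ≤ k)
    (h : ℝ) (hh : 1 ≤ h) (C : Finset (EuclideanSpace ℝ (Fin d))) (hCX : C ⊆ X)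
    (hdiam : ∀ p ∈ C, Metric.diam (C : Set (EuclideanSpace ℝ (Fin d))) ≤ h * kthDist X k p) :
    ((C.card : ℝ) ≤ k * (1 + 8 * h) ^ d) ∧
      ((2 : ℝ) ^ (C.card : ℝ) ≤ (2 : ℝ) ^ ((k : ℝ) * (1 + 8 * h) ^ d)) := by
  have hcard : (C.card : ℝ) ≤ k * (1 + 8 * h) ^ d :=
    (card_le_of_diam_le_mul_kthDist X k hk (by linarith) hCX hdiam).trans (by gcongr; linarith)
  exact ⟨hcard, Real.rpow_le_rpow_of_exponent_le one_le_two hcard⟩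

/-- If every point `p` of a cluster `C ⊆ X` satisfies `diam(C) ≤ h·γ(p)`, then
`|C| ≤ k·(1+8h)^d`; consequently the brute-force enumeration over label flips in `C`
considers at most `2^{k·(1+8h)^d}` solutions. -/
theorem cluster_card_and_enumeration_bound {d k : ℕ}
    (X : Finset (EuclideanSpace ℝ (Fin d))) (hk : 1 ≤ k) (hkX : k ≤ X.card)
    (h : ℝ) (hh : 1 ≤ h) (C : Finset (EuclideanSpace ℝ (Fin d))) (hCX : C ⊆ X)
    (hdiam : ∀ p ∈ C, Metric.diam (C : Set (EuclideanSpace ℝ (Fin d))) ≤ h * kthDist X k p) :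
    ((C.card : ℝ) ≤ k * (1 + 8 * h) ^ d) ∧
      ((2 : ℝ) ^ (C.card : ℝ) ≤ (2 : ℝ) ^ ((k : ℝ) * (1 + 8 * h) ^ d)) :=
  cluster_card_and_enumeration_bound_general X hk h hh C hCX hdiam
end
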